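/- For every x ∈ ℝ², every invertible real 2×2 matrix A, and every ξ ∈ L²(ℝ² × ℝ; ℂ), one has ∫_{ℝ²×ℝ} |(σ₂[x,A]ξ)(ω, ω₃)|² dω dω₃ = ∫_{ℝ²×ℝ} |ξ(ω, ω₃)|² dω dω₃. In particular σ₂[x,A] is a unitary operator on L²(ℝ² × ℝ; ℂ). -/

import Mathlib

/-!
Since `‖ωA‖² v_{ω,A} = det A · ‖ω‖²`, the squared amplitude of `σ₂[x,A]` at `ω` is
`|det A| · |v_{ω,A}|`, and the phase has modulus one. For `ω ≠ 0` the number `v_{ω,A}` is nonzero,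
so substituting `ω₃ ↦ ω₃ v_{ω,A}` in the inner integral absorbs the factor `|v_{ω,A}|`; the linear
substitution `ω ↦ ωA` in the outer integral then absorbs `|det A|`.
-/

open MeasureTheory Matrix
open scoped ENNReal

noncomputable section

/-- `‖ω‖²`, the squared Euclidean norm of the row vector `ω`. -/
def nsq (ω : Fin 2 → ℝ) : ℝ := ω 0 ^ 2 + ω 1 ^ 2

/-- `u_{ω,A}` for a row vector `ω = (ω 0, ω 1)` and a matrix
`A = [[a, b], [c, d]] = [[A 0 0, A 0 1], [A 1 0, A 1 1]]`. -/
def uu (ω : Fin 2 → ℝ) (A : Matrix (Fin 2) (Fin 2) ℝ) : ℝ :=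
  ((A 0 0 * A 1 0 + A 0 1 * A 1 1) * (ω 0 ^ 2 - ω 1 ^ 2)
      - (A 0 0 ^ 2 + A 0 1 ^ 2 - A 1 0 ^ 2 - A 1 1 ^ 2) * (ω 0 * ω 1))
    / ((A 0 0 * ω 0 + A 1 0 * ω 1) ^ 2 + (A 0 1 * ω 0 + A 1 1 * ω 1) ^ 2)

/-- `v_{ω,A}`. -/
def vv (ω : Fin 2 → ℝ) (A : Matrix (Fin 2) (Fin 2) ℝ) : ℝ :=
  ((A 0 0 * A 1 1 - A 0 1 * A 1 0) * (ω 0 ^ 2 + ω 1 ^ 2))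
    / ((A 0 0 * ω 0 + A 1 0 * ω 1) ^ 2 + (A 0 1 * ω 0 + A 1 1 * ω 1) ^ 2)

/-- The operator `σ₂[x,A]` on functions of `(ω, ω₃) ∈ ℝ² × ℝ`:
`(σ₂[x,A]ξ)(ω, ω₃) = (|det A|·‖ω‖/‖ωA‖)·e^{2πi(ω·x + ω₃·u_{ω,A})}·ξ(ωA, ω₃·v_{ω,A})`. -/
def sigma2 (x : Fin 2 → ℝ) (A : Matrix (Fin 2) (Fin 2) ℝ)
    (ξ : (Fin 2 → ℝ) × ℝ → ℂ) : (Fin 2 → ℝ) × ℝ → ℂ := fun p =>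
  (((|A.det| * Real.sqrt (nsq p.1) / Real.sqrt (nsq (vecMul p.1 A))) : ℝ) : ℂ)
    * Complex.exp (((2 * Real.pi * (p.1 0 * x 0 + p.1 1 * x 1 + p.2 * uu p.1 A)) : ℝ) * Complex.I)
    * ξ (vecMul p.1 A, p.2 * vv p.1 A)

section FiberDilation

variable {α β : Type*} [MeasurableSpace α] [MeasurableSpace β]

def fiberDilation (φ : α → β) (v : α → ℝ) (p : α × ℝ) : β × ℝ := (φ p.1, p.2 * v p.1)

variable {μ : Measure α} {φ : α → β} {v : α → ℝ}

lemma Measurable.fiberDilation (hφ : Measurable φ) (hv : Measurable v) :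
    Measurable (fiberDilation φ v) :=
  (hφ.comp measurable_fst).prodMk (measurable_snd.mul (hv.comp measurable_fst))

lemma lintegral_comp_fiberDilation (hφ : Measurable φ) (hv_meas : Measurable v)
    (hv : ∀ᵐ a ∂μ, v a ≠ 0) {F : β × ℝ → ℝ≥0∞} (hF : Measurable F) :
    ∫⁻ p, ENNReal.ofReal |v p.1| * F (fiberDilation φ v p) ∂(μ.prod volume)
      = ∫⁻ q, F q ∂((μ.map φ).prod volume) := by
  have hinner : ∀ᵐ a ∂μ, ∫⁻ t, ENNReal.ofReal |v a| * F (φ a, t * v a) = ∫⁻ s, F (φ a, s) := by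
    filter_upwards [hv] with a ha
    have hFa : Measurable fun s => F (φ a, s) := hF.comp measurable_prodMk_left
    have hsub : ∫⁻ t, F (φ a, t * v a) = ∫⁻ s, F (φ a, s) ∂(volume.map (· * v a)) :=
      (lintegral_map hFa (measurable_mul_const _)).symm
    rw [lintegral_const_mul' _ _ ENNReal.ofReal_ne_top, hsub,
      Real.map_volume_mul_right ha,
      lintegral_smul_measure, smul_eq_mul, ← mul_assoc, ← ENNReal.ofReal_mul (abs_nonneg _),
      ← abs_mul, mul_inv_cancel₀ ha, abs_one, ENNReal.ofReal_one, one_mul]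
  have hmeas : Measurable fun p : α × ℝ => ENNReal.ofReal |v p.1| * F (fiberDilation φ v p) :=
    ((hv_meas.comp measurable_fst).abs.ennreal_ofReal).mul (hF.comp (hφ.fiberDilation hv_meas))
  rw [lintegral_prod _ hmeas.aemeasurable, lintegral_prod _ hF.aemeasurable,
    lintegral_map hF.lintegral_prod_right' hφ]
  exact lintegral_congr_ae hinner

lemma map_fiberDilation_withDensity (hφ : Measurable φ) (hv_meas : Measurable v)
    (hv : ∀ᵐ a ∂μ, v a ≠ 0) :
    ((μ.prod volume).withDensity fun p => ENNReal.ofReal |v p.1|).map (fiberDilation φ v)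
      = (μ.map φ).prod volume :=
  Measure.ext_of_lintegral _ fun F hF => by
    rw [lintegral_map hF (hφ.fiberDilation hv_meas)]
    exact (lintegral_withDensity_eq_lintegral_mul _
      (hv_meas.comp measurable_fst).abs.ennreal_ofReal (hF.comp (hφ.fiberDilation hv_meas))).trans
      (lintegral_comp_fiberDilation hφ hv_meas hv hF)

end FiberDilation

lemma Real.map_vecMul_volume_pi_eq_smul_volume_pi {ι : Type*} [Fintype ι] [DecidableEq ι]
    {A : Matrix ι ι ℝ} (hA : A.det ≠ 0) :
    (volume : Measure (ι → ℝ)).map (fun ω => ω ᵥ* A) = ENNReal.ofReal |A.det⁻¹| • volume := by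
  have hlin : (fun ω : ι → ℝ => ω ᵥ* A) = toLin' Aᵀ :=
    funext fun ω => by rw [toLin'_apply, mulVec_transpose]
  rw [hlin, Real.map_matrix_volume_pi_eq_smul_volume_pi (by rwa [det_transpose]), det_transpose]

lemma nsq_eq_dotProduct (ω : Fin 2 → ℝ) : nsq ω = ω ⬝ᵥ ω := by
  simp [nsq, dotProduct, Fin.sum_univ_two, sq]

lemma nsq_nonneg (ω : Fin 2 → ℝ) : 0 ≤ nsq ω := by
  unfold nsq; positivity

lemma nsq_ne_zero {ω : Fin 2 → ℝ} (hω : ω ≠ 0) : nsq ω ≠ 0 := by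
  rwa [nsq_eq_dotProduct, Ne, dotProduct_self_eq_zero]

lemma vv_eq (ω : Fin 2 → ℝ) (A : Matrix (Fin 2) (Fin 2) ℝ) :
    vv ω A = A.det * nsq ω / nsq (ω ᵥ* A) := by
  simp only [vv, det_fin_two, nsq, vecMul, dotProduct, Fin.sum_univ_two]
  ring_nf

lemma vv_ne_zero {ω : Fin 2 → ℝ} {A : Matrix (Fin 2) (Fin 2) ℝ} (hA : A.det ≠ 0)
    (hω : ω ≠ 0) : vv ω A ≠ 0 := by
  have hωA : ω ᵥ* A ≠ 0 := fun h =>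
    hω (vecMul_injective_iff_isUnit.mpr ((isUnit_iff_isUnit_det A).mpr hA.isUnit)
      (h.trans (zero_vecMul A).symm))
  rw [vv_eq]
  exact div_ne_zero (mul_ne_zero hA (nsq_ne_zero hω)) (nsq_ne_zero hωA)

-- Also at `ω = 0`, where both sides vanish through `x / 0 = 0`.
lemma norm_sigma2_sq (x : Fin 2 → ℝ) (A : Matrix (Fin 2) (Fin 2) ℝ)
    (ξ : (Fin 2 → ℝ) × ℝ → ℂ) (p : (Fin 2 → ℝ) × ℝ) :
    ‖sigma2 x A ξ p‖ ^ 2 = |A.det| * |vv p.1 A| * ‖ξ (p.1 ᵥ* A, p.2 * vv p.1 A)‖ ^ 2 := by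
  rw [sigma2, norm_mul, norm_mul, Complex.norm_exp_ofReal_mul_I, mul_one, Complex.norm_real,
    Real.norm_eq_abs, mul_pow, sq_abs, vv_eq, abs_div, abs_mul, abs_of_nonneg (nsq_nonneg _),
    abs_of_nonneg (nsq_nonneg _), div_pow, mul_pow, Real.sq_sqrt (nsq_nonneg _),
    Real.sq_sqrt (nsq_nonneg _)]
  ring

lemma enorm_sigma2_sq (x : Fin 2 → ℝ) (A : Matrix (Fin 2) (Fin 2) ℝ)
    (ξ : (Fin 2 → ℝ) × ℝ → ℂ) (p : (Fin 2 → ℝ) × ℝ) :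
    (‖sigma2 x A ξ p‖₊ : ℝ≥0∞) ^ 2 = ENNReal.ofReal |A.det| *
      (ENNReal.ofReal |vv p.1 A| * (‖ξ (fiberDilation (· ᵥ* A) (vv · A) p)‖₊ : ℝ≥0∞) ^ 2) := by
  simp only [← enorm_eq_nnnorm, ← ofReal_norm]
  rw [← ENNReal.ofReal_pow (norm_nonneg _), ← ENNReal.ofReal_pow (norm_nonneg _),
    ← ENNReal.ofReal_mul (abs_nonneg _), ← ENNReal.ofReal_mul (abs_nonneg _), ← mul_assoc,
    norm_sigma2_sq]
  rfl

@[fun_prop]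
lemma measurable_vv (A : Matrix (Fin 2) (Fin 2) ℝ) : Measurable (vv · A) := by
  unfold vv
  fun_prop

lemma map_fiberDilation_vecMul_withDensity {A : Matrix (Fin 2) (Fin 2) ℝ} (hA : A.det ≠ 0) :
    ((volume : Measure ((Fin 2 → ℝ) × ℝ)).withDensity fun p => ENNReal.ofReal |vv p.1 A|).map
      (fiberDilation (· ᵥ* A) (vv · A)) = ENNReal.ofReal |A.det⁻¹| • volume := by
  have hvv : ∀ᵐ ω : Fin 2 → ℝ, vv ω A ≠ 0 :=
    (Measure.ae_ne volume 0).mono fun ω => vv_ne_zero hA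
  rw [Measure.volume_eq_prod, map_fiberDilation_withDensity (by fun_prop) (measurable_vv A) hvv,
    Real.map_vecMul_volume_pi_eq_smul_volume_pi hA, Measure.prod_smul_left]

/-- `σ₂[x,A]` preserves the `L²(ℝ²×ℝ)`-norm; in particular it is a unitary
operator on `L²(ℝ²×ℝ; ℂ)`. -/
theorem sigma2_isometry (x : Fin 2 → ℝ) (A : Matrix (Fin 2) (Fin 2) ℝ)
    (hA : A.det ≠ 0) (ξ : (Fin 2 → ℝ) × ℝ → ℂ)
    (hξ : MemLp ξ 2 (volume : Measure ((Fin 2 → ℝ) × ℝ))) :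
    ∫⁻ p : (Fin 2 → ℝ) × ℝ, (‖sigma2 x A ξ p‖₊ : ℝ≥0∞) ^ 2
      = ∫⁻ p : (Fin 2 → ℝ) × ℝ, (‖ξ p‖₊ : ℝ≥0∞) ^ 2 := by
  set T := fiberDilation (· ᵥ* A) (vv · A)
  set ρ : Measure ((Fin 2 → ℝ) × ℝ) := volume.withDensity fun p => ENNReal.ofReal |vv p.1 A|
  have hρ : ρ.map T = ENNReal.ofReal |A.det⁻¹| • volume :=
    map_fiberDilation_vecMul_withDensity hA
  have hξ_meas : AEMeasurable (fun q => (‖ξ q‖₊ : ℝ≥0∞) ^ 2) (ρ.map T) := by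
    rw [hρ]
    exact (hξ.1.enorm.pow_const 2).smul_measure _
  calc ∫⁻ p, (‖sigma2 x A ξ p‖₊ : ℝ≥0∞) ^ 2
      = ENNReal.ofReal |A.det| * ∫⁻ p, ENNReal.ofReal |vv p.1 A| * (‖ξ (T p)‖₊ : ℝ≥0∞) ^ 2 := by
        simp_rw [enorm_sigma2_sq]
        exact lintegral_const_mul' _ _ ENNReal.ofReal_ne_top
    _ = ENNReal.ofReal |A.det| * ∫⁻ q, (‖ξ q‖₊ : ℝ≥0∞) ^ 2 ∂(ρ.map T) := by
        have hT : Measurable T := Measurable.fiberDilation (by fun_prop) (measurable_vv A)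
        rw [lintegral_map' hξ_meas hT.aemeasurable,
          lintegral_withDensity_eq_lintegral_mul_non_measurable _ (by fun_prop) (by simp)]
        rfl
    _ = ∫⁻ q, (‖ξ q‖₊ : ℝ≥0∞) ^ 2 := by
        rw [hρ, lintegral_smul_measure, smul_eq_mul, ← mul_assoc,
          ← ENNReal.ofReal_mul (abs_nonneg _), ← abs_mul, mul_inv_cancel₀ hA, abs_one,
          ENNReal.ofReal_one, one_mul]
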